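/- Let G be a group, H ≤ G with the complemented commutator property via section s : G/H → G, χ a unitary character of H, and k ∈ L¹(G/H). Define the generalized isotropic symbol k̆(g) = ∫_{G/H} k(x) χ(g⁻¹ s(x)⁻¹ g s(x)) dx. Then for any χ-covariant function F on G (F(gh) = χ(h)F(g)), the operator ∫_{G/H} k(x) (Λ⊗R)(s(x)) dx acts on F by pointwise multiplication by k̆: (∫ k(x)(Λ⊗R)(s(x)) dx · F)(g) = k̆(g) F(g). -/
import Mathlib

open MeasureTheory

/-- Let `H ≤ G` with section `s : G/H → G` having the complemented
commutator property, `χ` a unitary character of `H` and `k ∈ L¹(G/H)`.  Define the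
generalized isotropic symbol `k̆(g) = ∫ k(x) χ(g⁻¹ s(x)⁻¹ g s(x)) dx`.  Then on every
`χ`-covariant function `F` the operator `∫ k(x) (Λ⊗R)(s(x)) dx` acts by pointwise
multiplication by `k̆`:
`∫ k(x) F(s(x)⁻¹ g s(x)) dx = k̆(g) F(g)`. -/
theorem relative_conjugation_acts_as_multiplication
    {G : Type*} [Group G] (H : Subgroup G)
    [MeasurableSpace (G ⧸ H)] (ν : Measure (G ⧸ H))
    (s : G ⧸ H → G) (hs : ∀ x : G ⧸ H, (QuotientGroup.mk (s x) : G ⧸ H) = x)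
    (hccp : ∀ (x : G ⧸ H) (g : G),
      (QuotientGroup.mk ((s x)⁻¹ * g * s x) : G ⧸ H) = QuotientGroup.mk g)
    (hmem : ∀ (x : G ⧸ H) (g : G), g⁻¹ * (s x)⁻¹ * g * s x ∈ H)
    (χ : H →* Circle) (k : G ⧸ H → ℂ) (hk : Integrable k ν)
    (F : G → ℂ) (hF : ∀ (g h : G) (hh : h ∈ H), F (g * h) = (χ ⟨h, hh⟩ : ℂ) * F g)
    (g : G) :
    ∫ x, k x * F ((s x)⁻¹ * g * s x) ∂ν
      = (∫ x, k x * (χ ⟨g⁻¹ * (s x)⁻¹ * g * s x, hmem x g⟩ : ℂ) ∂ν) * F g := by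
  rw [← integral_mul_const]
  congr 1
  ext x
  have h1 : (s x)⁻¹ * g * s x = g * (g⁻¹ * (s x)⁻¹ * g * s x) := by group
  rw [h1, hF g _ (hmem x g)]; ring
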